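/- The map P defined on entire functions by P(g)(z) = g(z)·g'(z) is not hypercyclic on H(ℂ): there is no entire function g such that for every entire function f and every ε > 0, R > 0 there exists n ∈ ℕ with sup_{|z| ≤ R} |P^n(g)(z) − f(z)| < ε. -/

import Mathlib

/-!
An orbit of `P` that approximates `id` on the closed unit disc reaches, by the minimum modulus
principle, a function `P^[n] g` with a zero `a` in that disc. Since `P h = h · h'`, the zero
persists: `P^[m] g a = 0` for all `m ≥ n`, so the values `P^[m] g a` are bounded, and the orbit
cannot approximate a constant larger than that bound at `a`.
-/

noncomputable def P (g : ℂ → ℂ) : ℂ → ℂ := fun z => g z * deriv g z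

open Metric Finset

theorem Differentiable.P {g : ℂ → ℂ} (hg : Differentiable ℂ g) : Differentiable ℂ (P g) :=
  hg.mul hg.deriv

theorem differentiable_iterate_P {g : ℂ → ℂ} (hg : Differentiable ℂ g) (n : ℕ) :
    Differentiable ℂ (P^[n] g) := by
  induction n with
  | zero => exact hg
  | succ n ih => simpa only [Function.iterate_succ_apply'] using ih.P

theorem P_apply_eq_zero {g : ℂ → ℂ} {a : ℂ} (h : g a = 0) : P g a = 0 := by
  simp [P, h]

theorem iterate_P_apply_eq_zero_of_le {g : ℂ → ℂ} {a : ℂ} {n m : ℕ} (h : P^[n] g a = 0)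
    (hnm : n ≤ m) : P^[m] g a = 0 := by
  induction m, hnm using Nat.le_induction with
  | base => exact h
  | succ m _ ih => rw [Function.iterate_succ_apply']; exact P_apply_eq_zero ih

/-- Minimum modulus principle: otherwise `1 / f` would violate the maximum modulus principle. -/
theorem exists_mem_closedBall_eq_zero_of_norm_center_lt {E : Type*} [NormedAddCommGroup E]
    [NormedSpace ℂ E] [Nontrivial E] {f : E → ℂ} {c : E} {r m : ℝ} (hr : 0 < r)
    (hf : DiffContOnCl ℂ f (ball c r)) (hc : ‖f c‖ < m) (hm : ∀ z ∈ sphere c r, m ≤ ‖f z‖) :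
    ∃ a ∈ closedBall c r, f a = 0 := by
  by_contra! hne
  have hm_pos : 0 < m := (norm_nonneg _).trans_lt hc
  have hinv : DiffContOnCl ℂ (fun z => (f z)⁻¹) (ball c r) :=
    ⟨fun z hz => (hf.differentiableAt isOpen_ball hz).inv
        (hne z (ball_subset_closedBall hz)) |>.differentiableWithinAt,
      by rw [closure_ball c hr.ne']; exact hf.continuousOn_ball.inv₀ hne⟩
  have hbound : ∀ z ∈ frontier (ball c r), ‖(f z)⁻¹‖ ≤ m⁻¹ := by
    intro z hz
    rw [frontier_ball c hr.ne'] at hz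
    rw [norm_inv]
    exact inv_anti₀ hm_pos (hm z hz)
  have hcenter := Complex.norm_le_of_forall_mem_frontier_norm_le isBounded_ball hinv hbound
    (subset_closure (mem_ball_self hr))
  rw [norm_inv, inv_le_inv₀ (norm_pos_iff.2 (hne c (mem_closedBall_self hr.le))) hm_pos]
    at hcenter
  linarith

theorem exists_eq_zero_of_norm_sub_id_lt {h : ℂ → ℂ} (hh : Differentiable ℂ h) {r : ℝ}
    (hr : 0 < r) (happrox : ∀ z : ℂ, ‖z‖ ≤ r → ‖h z - z‖ < r / 2) :
    ∃ a : ℂ, ‖a‖ ≤ r ∧ h a = 0 := by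
  have hcenter : ‖h 0‖ < r / 2 := by simpa using happrox 0 (by simpa using hr.le)
  have hsphere : ∀ z ∈ sphere (0 : ℂ) r, r / 2 ≤ ‖h z‖ := by
    intro z hz
    rw [mem_sphere_zero_iff_norm] at hz
    have := happrox z hz.le
    have := norm_sub_norm_le z (z - h z)
    rw [sub_sub_cancel, norm_sub_rev] at this
    linarith
  obtain ⟨a, ha, hzero⟩ :=
    exists_mem_closedBall_eq_zero_of_norm_center_lt hr hh.diffContOnCl hcenter hsphere
  exact ⟨a, mem_closedBall_zero_iff.1 ha, hzero⟩

theorem norm_le_sum_range_of_eq_zero {E : Type*} [SeminormedAddCommGroup E] {u : ℕ → E} {n : ℕ}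
    (hu : ∀ m, n ≤ m → u m = 0) (m : ℕ) : ‖u m‖ ≤ ∑ k ∈ range n, ‖u k‖ := by
  rcases lt_or_ge m n with hmn | hnm
  · exact single_le_sum (fun k _ => norm_nonneg (u k)) (mem_range.2 hmn)
  · rw [hu m hnm, norm_zero]
    exact sum_nonneg fun k _ => norm_nonneg (u k)

/-- `P(g) = g·g'` is not hypercyclic on the space of entire functions. -/
theorem P_not_hypercyclic :
    ¬ ∃ g : ℂ → ℂ, Differentiable ℂ g ∧
      ∀ f : ℂ → ℂ, Differentiable ℂ f → ∀ ε > (0 : ℝ), ∀ R > (0 : ℝ),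
        ∃ n : ℕ, ∀ z : ℂ, ‖z‖ ≤ R →
          ‖(P^[n] g) z - f z‖ < ε := by
  rintro ⟨g, hg, hyp⟩
  obtain ⟨n, hn⟩ := hyp id differentiable_id (1 / 2) (by norm_num) 1 one_pos
  obtain ⟨a, ha, hzero⟩ := exists_eq_zero_of_norm_sub_id_lt (differentiable_iterate_P hg n)
    one_pos hn
  set B := ∑ k ∈ range n, ‖P^[k] g a‖
  have hbound (m : ℕ) : ‖P^[m] g a‖ ≤ B :=
    norm_le_sum_range_of_eq_zero (fun _ hm => iterate_P_apply_eq_zero_of_le hzero hm) m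
  obtain ⟨m, hm⟩ := hyp (fun _ => ((B + 1 : ℝ) : ℂ)) (differentiable_const _) 1 one_pos 1 one_pos
  have hfar : ‖((B + 1 : ℝ) : ℂ)‖ - ‖P^[m] g a‖ ≤ ‖P^[m] g a - ((B + 1 : ℝ) : ℂ)‖ := by
    rw [norm_sub_rev]; exact norm_sub_norm_le _ _
  have hB : 0 ≤ B := sum_nonneg fun k _ => norm_nonneg _
  rw [Complex.norm_real, Real.norm_of_nonneg (by linarith)] at hfar
  linarith [hm a ha, hbound m]
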